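/- Substituting the optimal Y given x into F yields a reduced objective: min_{Y : Σ y_i = y} F(x, Y) = (1/n)‖y − Hx‖₂², where Hx = Σ_j x_j h_j. Hence the alternating minimization problem in (x, Y) over x ∈ [−l,l]^n reduces to minimizing ‖y − Hx‖₂² over the box [−l,l]^n. -/

import Mathlib

/-! Writing `zᵢ = yᵢ - xᵢ hᵢ`, the constraint becomes `∑ zᵢ = y - Hx`. By the triangle inequality and
Cauchy–Schwarz, `‖∑ zᵢ‖² ≤ n ∑ ‖zᵢ‖²`, with equality when the residual is split evenly,
`zᵢ = (y - Hx)/n`. So the minimum over `Y` is `‖y - Hx‖² / n`, and scaling by `1/n > 0` does not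
change the minimizers over the box. -/

open Finset

section

variable {ι E : Type*} [Fintype ι] [SeminormedAddCommGroup E]

theorem sq_norm_sum_le_card_mul_sum_sq_norm (z : ι → E) :
    ‖∑ i, z i‖ ^ 2 ≤ Fintype.card ι * ∑ i, ‖z i‖ ^ 2 :=
  calc ‖∑ i, z i‖ ^ 2 ≤ (∑ i, ‖z i‖) ^ 2 := by gcongr; exact norm_sum_le _ _
    _ ≤ Fintype.card ι * ∑ i, ‖z i‖ ^ 2 := by
      simpa using sq_sum_le_card_mul_sum_sq (s := univ) (f := fun i => ‖z i‖)

variable [NormedSpace ℝ E] [Nonempty ι]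

theorem isLeast_sum_sq_norm_sub_of_sum_eq (a : ι → E) (y : E) :
    IsLeast {v : ℝ | ∃ Y : ι → E, ∑ i, Y i = y ∧ v = ∑ i, ‖Y i - a i‖ ^ 2}
      ((Fintype.card ι : ℝ)⁻¹ * ‖y - ∑ i, a i‖ ^ 2) := by
  set r := y - ∑ i, a i
  have hN : (0 : ℝ) < Fintype.card ι := by positivity
  constructor
  · refine ⟨fun i => a i + (Fintype.card ι : ℝ)⁻¹ • r, ?_, ?_⟩
    · rw [sum_add_distrib, sum_const, card_univ, ← Nat.cast_smul_eq_nsmul ℝ, smul_smul,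
        mul_inv_cancel₀ hN.ne', one_smul, add_sub_cancel]
    · simp only [add_sub_cancel_left, norm_smul, mul_pow, sum_const, card_univ, nsmul_eq_mul,
        norm_inv, Real.norm_natCast]
      field_simp
  · rintro v ⟨Y, hY, rfl⟩
    have hr : r = ∑ i, (Y i - a i) := by rw [sum_sub_distrib, hY]
    calc (Fintype.card ι : ℝ)⁻¹ * ‖r‖ ^ 2
        ≤ (Fintype.card ι : ℝ)⁻¹ * (Fintype.card ι * ∑ i, ‖Y i - a i‖ ^ 2) := by
          rw [hr]; gcongr; exact sq_norm_sum_le_card_mul_sum_sq_norm _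
      _ = ∑ i, ‖Y i - a i‖ ^ 2 := by field_simp

end

theorem stmt9_general (m n : ℕ) (hn : 1 ≤ n) (h : Fin n → EuclideanSpace ℝ (Fin m))
    (y : EuclideanSpace ℝ (Fin m)) (l : ℝ) :
    (∀ x : Fin n → ℝ,
      IsLeast {v : ℝ | ∃ Y : Fin n → EuclideanSpace ℝ (Fin m),
          (∑ i, Y i) = y ∧ v = ∑ i, ‖Y i - x i • h i‖ ^ 2}
        ((1 / n) * ‖y - ∑ j, x j • h j‖ ^ 2)) ∧
    ∀ xs : Fin n → ℝ, (∀ i, xs i ∈ Set.Icc (-l) l) →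
      ((∀ x : Fin n → ℝ, (∀ i, x i ∈ Set.Icc (-l) l) →
          (1 / n) * ‖y - ∑ j, xs j • h j‖ ^ 2 ≤ (1 / n) * ‖y - ∑ j, x j • h j‖ ^ 2) ↔
       (∀ x : Fin n → ℝ, (∀ i, x i ∈ Set.Icc (-l) l) →
          ‖y - ∑ j, xs j • h j‖ ^ 2 ≤ ‖y - ∑ j, x j • h j‖ ^ 2)) := by
  have : Nonempty (Fin n) := ⟨⟨0, hn⟩⟩
  have hn' : (0 : ℝ) < 1 / n := by positivity
  refine ⟨fun x => ?_, fun xs _ => forall₂_congr fun x _ => mul_le_mul_iff_right₀ hn'⟩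
  simpa [one_div] using isLeast_sum_sq_norm_sub_of_sum_eq (fun j => x j • h j) y

theorem stmt9 (m n : ℕ) (hn : 1 ≤ n) (h : Fin n → EuclideanSpace ℝ (Fin m))
    (y : EuclideanSpace ℝ (Fin m)) (l : ℝ) (hl : 0 < l) :
    (∀ x : Fin n → ℝ,
      IsLeast {v : ℝ | ∃ Y : Fin n → EuclideanSpace ℝ (Fin m),
          (∑ i, Y i) = y ∧ v = ∑ i, ‖Y i - x i • h i‖ ^ 2}
        ((1 / n) * ‖y - ∑ j, x j • h j‖ ^ 2)) ∧
    ∀ xs : Fin n → ℝ, (∀ i, xs i ∈ Set.Icc (-l) l) →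
      ((∀ x : Fin n → ℝ, (∀ i, x i ∈ Set.Icc (-l) l) →
          (1 / n) * ‖y - ∑ j, xs j • h j‖ ^ 2 ≤ (1 / n) * ‖y - ∑ j, x j • h j‖ ^ 2) ↔
       (∀ x : Fin n → ℝ, (∀ i, x i ∈ Set.Icc (-l) l) →
          ‖y - ∑ j, xs j • h j‖ ^ 2 ≤ ‖y - ∑ j, x j • h j‖ ^ 2)) :=
  stmt9_general m n hn h y l
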